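/- arXiv:1903.12562 — 3 statements merged into one kernel-verified Lean document; each statement's English description precedes it below -/
import Mathlib

section
/- Let n ≥ 2 and let q : ℝⁿ → ℂ be a continuous function with compact support. If ∫_{ℝⁿ} q(x) v₁(x) v₂(x) dx = 0 for every pair of functions v₁, v₂ : ℝⁿ → ℂ that are harmonic on ℝⁿ, then q ≡ 0. -/
open MeasureTheory Complex FourierTransform Real

def IsHarmonicOn (n : ℕ) (v : EuclideanSpace ℝ (Fin n) → ℂ) : Prop :=
  ContDiff ℝ (⊤ : ℕ∞) v ∧ ∀ x : EuclideanSpace ℝ (Fin n),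
    ∑ i : Fin n, iteratedFDeriv ℝ 2 v x (fun _ => EuclideanSpace.single i (1 : ℝ)) = 0

noncomputable def expL (n : ℕ) (ζ : Fin n → ℂ) : EuclideanSpace ℝ (Fin n) →L[ℝ] ℂ :=
  ∑ i, ζ i • (Complex.ofRealCLM.comp (EuclideanSpace.proj i))

lemma expL_apply (n : ℕ) (ζ : Fin n → ℂ) (x : EuclideanSpace ℝ (Fin n)) :
    expL n ζ x = ∑ i, ζ i * (x i : ℂ) := by
  simp [expL, smul_eq_mul]

lemma expL_single (n : ℕ) (ζ : Fin n → ℂ) (i : Fin n) :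
    expL n ζ (EuclideanSpace.single i (1:ℝ)) = ζ i := by
  rw [expL_apply]
  simp [EuclideanSpace.single_apply, apply_ite (Complex.ofReal), mul_ite]

lemma hasFDerivAt_expexp (n : ℕ) (ζ : Fin n → ℂ) (x : EuclideanSpace ℝ (Fin n)) :
    HasFDerivAt (fun x => Complex.exp (expL n ζ x))
      (Complex.exp (expL n ζ x) • expL n ζ) x :=
  (Complex.hasDerivAt_exp (expL n ζ x)).comp_hasFDerivAt x (expL n ζ).hasFDerivAt

lemma harmonic_exp (n : ℕ) (ζ : Fin n → ℂ) (hζ : ∑ i, ζ i ^ 2 = 0) :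
    IsHarmonicOn n (fun x => Complex.exp (expL n ζ x)) := by
  constructor
  · exact Complex.contDiff_exp.comp (expL n ζ).contDiff
  · intro x
    have hfd : fderiv ℝ (fun x => Complex.exp (expL n ζ x))
        = fun x => Complex.exp (expL n ζ x) • expL n ζ :=
      funext fun x => (hasFDerivAt_expexp n ζ x).fderiv
    have h2 : fderiv ℝ (fderiv ℝ (fun x => Complex.exp (expL n ζ x))) x
        = ContinuousLinearMap.smulRight (Complex.exp (expL n ζ x) • expL n ζ) (expL n ζ) := by
      rw [hfd]
      exact ((hasFDerivAt_expexp n ζ x).smul_const (expL n ζ)).fderiv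
    have key : ∀ i : Fin n,
        iteratedFDeriv ℝ 2 (fun x => Complex.exp (expL n ζ x)) x
          (fun _ => EuclideanSpace.single i (1:ℝ))
        = Complex.exp (expL n ζ x) * ζ i ^ 2 := by
      intro i
      rw [iteratedFDeriv_two_apply, h2]
      simp [expL_single, smul_eq_mul]
      ring
    simp only [key, ← Finset.mul_sum, hζ, mul_zero]

lemma exists_orth (n : ℕ) (hn : 2 ≤ n) (ξ : EuclideanSpace ℝ (Fin n)) :
    ∃ k : EuclideanSpace ℝ (Fin n), inner ℝ k ξ = (0:ℝ) ∧ ‖k‖ = Real.pi * ‖ξ‖ := by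
  rcases eq_or_ne ξ 0 with rfl | hξ
  · exact ⟨0, by simp⟩
  · have hbot : (ℝ ∙ ξ)ᗮ ≠ ⊥ := by
      intro hb
      have htop : (ℝ ∙ ξ) = ⊤ := by
        rwa [Submodule.orthogonal_eq_bot_iff] at hb
      have h1 : Module.finrank ℝ (ℝ ∙ ξ) = 1 := finrank_span_singleton hξ
      have h2 : Module.finrank ℝ (EuclideanSpace ℝ (Fin n)) = n := by simp
      rw [htop, finrank_top, h2] at h1
      omega
    obtain ⟨u, hu, hu0⟩ := Submodule.exists_mem_ne_zero_of_ne_bot hbot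
    refine ⟨(Real.pi * ‖ξ‖ / ‖u‖) • u, ?_, ?_⟩
    · have := hu ξ (Submodule.mem_span_singleton_self ξ)
      rw [real_inner_smul_left]
      rw [real_inner_comm] at this
      rw [this, mul_zero]
    · rw [norm_smul, norm_div, Real.norm_eq_abs, Real.norm_eq_abs,
        _root_.abs_of_nonneg (by positivity : (0:ℝ) ≤ Real.pi * ‖ξ‖), _root_.abs_of_nonneg (norm_nonneg u),
        div_mul_cancel₀]
      exact norm_ne_zero_iff.mpr hu0

theorem stmt_1 (n : ℕ) (hn : 2 ≤ n) (q : EuclideanSpace ℝ (Fin n) → ℂ)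
    (hq_cont : Continuous q) (hq_supp : HasCompactSupport q)
    (h : ∀ v₁ v₂ : EuclideanSpace ℝ (Fin n) → ℂ, IsHarmonicOn n v₁ → IsHarmonicOn n v₂ →
      ∫ x, q x * v₁ x * v₂ x = 0) :
    ∀ x, q x = 0 := by
  have hint : Integrable q := hq_cont.integrable_of_hasCompactSupport hq_supp
  have hF : 𝓕 q = 0 := by
    funext ξ
    simp only [Pi.zero_apply]
    obtain ⟨k, hk1, hk2⟩ := exists_orth n hn ξ
    have hkx : ∑ i, k i * ξ i = 0 := by
      rw [← hk1, PiLp.inner_apply]; simp [RCLike.inner_apply, mul_comm]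
    have hknorm : ∑ i, k i ^ 2 = Real.pi ^ 2 * ∑ i, ξ i ^ 2 := by
      have h1 : ∑ i, k i * k i = ‖k‖ ^ 2 := by
        rw [← real_inner_self_eq_norm_sq, PiLp.inner_apply]; simp [RCLike.inner_apply, sq]
      have h2 : ∑ i, ξ i * ξ i = ‖ξ‖ ^ 2 := by
        rw [← real_inner_self_eq_norm_sq, PiLp.inner_apply]; simp [RCLike.inner_apply, sq]
      simp only [← sq] at h1 h2
      rw [h1, h2, hk2, mul_pow]
    set ζ₁ : Fin n → ℂ := fun i => (k i : ℂ) + (-Real.pi * ξ i : ℝ) * Complex.I with hζ₁def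
    set ζ₂ : Fin n → ℂ := fun i => -(k i : ℂ) + (-Real.pi * ξ i : ℝ) * Complex.I with hζ₂def
    have hsq : ∀ (s : ℝ) (i : Fin n),
        ((s * k i : ℝ) + (-Real.pi * ξ i : ℝ) * Complex.I) ^ 2
        = ((s^2 * k i ^ 2 - Real.pi ^2 * ξ i ^2 : ℝ) : ℂ)
          + ((2 * s * (-Real.pi) * (k i * ξ i) : ℝ) : ℂ) * Complex.I := by
      intro s i
      have : (Complex.I)^2 = -1 := Complex.I_sq
      push_cast
      ring_nf
      rw [Complex.I_sq]
      ring
    have hsum : ∀ s : ℝ, s^2 = 1 → ∑ i, ((s * k i : ℝ) + (-Real.pi * ξ i : ℝ) * Complex.I) ^ 2 = 0 := by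
      intro s hs
      simp only [hsq s]
      rw [Finset.sum_add_distrib, ← Finset.sum_mul, ← Complex.ofReal_sum, ← Complex.ofReal_sum,
        Finset.sum_sub_distrib, ← Finset.mul_sum, ← Finset.mul_sum, hknorm, hs, one_mul,
        sub_self, ← Finset.mul_sum, hkx, mul_zero]
      simp
    have hz1 : ∑ i, ζ₁ i ^ 2 = 0 := by
      have := hsum 1 (by norm_num)
      simpa [hζ₁def] using this
    have hz2 : ∑ i, ζ₂ i ^ 2 = 0 := by
      have := hsum (-1) (by norm_num)
      simpa [hζ₂def] using this
    have h0 := h _ _ (harmonic_exp n ζ₁ hz1) (harmonic_exp n ζ₂ hz2)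
    rw [Real.fourier_eq', ← h0]
    congr 1
    funext x
    have hprod : ∑ i, (ζ₁ i * (x i : ℂ) + ζ₂ i * (x i : ℂ))
        = ((-2 * Real.pi * (inner ℝ x ξ : ℝ) : ℝ) : ℂ) * Complex.I := by
      have : ∀ i, ζ₁ i * (x i : ℂ) + ζ₂ i * (x i : ℂ)
          = ((2 * (-Real.pi * ξ i) * x i : ℝ) : ℂ) * Complex.I := by
        intro i; simp only [hζ₁def, hζ₂def]; push_cast; ring
      rw [Finset.sum_congr rfl fun i _ => this i, ← Finset.sum_mul, ← Complex.ofReal_sum]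
      congr 2
      rw [PiLp.inner_apply]
      simp only [RCLike.inner_apply, conj_trivial, Finset.mul_sum]
      exact Finset.sum_congr rfl fun i _ => by ring
    have hexp : Complex.exp (expL n ζ₁ x) * Complex.exp (expL n ζ₂ x)
        = Complex.exp (((-2 * Real.pi * (inner ℝ x ξ : ℝ) : ℝ) : ℂ) * Complex.I) := by
      rw [← Complex.exp_add, expL_apply, expL_apply, ← Finset.sum_add_distrib, hprod]
    rw [smul_eq_mul, mul_comm, mul_assoc (q x), hexp]
  intro x
  have hFint : Integrable (𝓕 q) := by rw [hF]; exact integrable_zero _ _ _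
  have := hint.fourierInv_fourier_eq hFint (hq_cont.continuousAt (x := x))
  rw [hF] at this
  rw [← this, Real.fourierInv_eq]
  simp
end

section
/- Let I be a nonempty finite index set and let t, s : I → ℝ be functions such that the map i ↦ (t(i), s(i)) is injective. Let L ≥ 1 be a real number with the property that L·|d₁ − d₂| > |d₂| whenever d₁ = t(i) − t(j) for some i, j ∈ I, d₂ = s(i') − s(j') for some i', j' ∈ I, and d₁ ≠ d₂. Then the map i ↦ L·(t(i) − s(i)) + s(i) from I to ℝ is injective. -/
theorem stmt_5 {I : Type*} [Fintype I] [Nonempty I] (t s : I → ℝ)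
    (h_inj : Function.Injective (fun i => (t i, s i)))
    (L : ℝ) (hL : 1 ≤ L)
    (hsep : ∀ i j i' j' : I, t i - t j ≠ s i' - s j' →
      L * |t i - t j - (s i' - s j')| > |s i' - s j'|) :
    Function.Injective (fun i => L * (t i - s i) + s i) := by
  intro i j hij
  simp only at hij
  have key : L * (t i - t j - (s i - s j)) = -(s i - s j) := by ring_nf; linarith
  by_cases h : t i - t j = s i - s j
  · have hB : s i - s j = 0 := by
      rw [h] at key; simp at key; linarith
    have hA : t i = t j := by
      have := h; rw [hB] at this; linarith
    exact h_inj (by simp [hA, show s i = s j by linarith])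
  · exfalso
    have := hsep i j i j h
    have : L * |t i - t j - (s i - s j)| = |s i - s j| := by
      rw [show L * |t i - t j - (s i - s j)| = |L * (t i - t j - (s i - s j))| by
        rw [abs_mul, abs_of_nonneg (show (0:ℝ) ≤ L by linarith)], key, abs_neg]
    linarith [hsep i j i j h]
end

section
/- Let d ≥ 1 and let H be a complex symmetric d × d matrix whose imaginary part Im H (the real symmetric matrix of imaginary parts of the entries) is positive definite. Let ρ, K, c > 0 and let ψ : ℝ^d → ℂ be a continuous function such that |ψ(z) − (1/2)⟨Hz, z⟩| ≤ K‖z‖³ and Im ψ(z) ≥ c‖z‖² for all z with ‖z‖ ≤ ρ, where ⟨Hz, z⟩ = ∑_{a,b} H_{ab} z_a z_b. Let B : ℝ^d → ℂ be a continuous function whose support is contained in the closed ball of radius ρ centered at 0. Then lim_{τ → ∞} τ^{d/2} ∫_{ℝ^d} e^{iτψ(z)} B(z) dz = B(0) · ∫_{ℝ^d} e^{(i/2)⟨Hz, z⟩} dz. -/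
/-!
Substitute `z ↦ τ^(-1/2) z`: by homogeneity of Haar measure this turns `τ^(d/2) ∫ e^{iτψ} B`
into `∫ e^{iτψ(τ^(-1/2) z)} B(τ^(-1/2) z) dz`. Since `τ ψ(τ^(-1/2) z) = Q z + O(τ^(-1/2))`
with `Q z = ½⟨Hz, z⟩`, the integrand tends pointwise to `e^{iQ z} B 0`, and the lower bound on
`Im ψ`, which is invariant under this scaling, dominates it by `sup ‖B‖ · e^{-c‖z‖²}`.
-/

open MeasureTheory Filter

/-- The complex quadratic form `⟨Hz, z⟩ = ∑_{a,b} H_{ab} z_a z_b` associated with a complex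
`d × d` matrix `H`, evaluated on a real vector `z`. -/
noncomputable def quadForm {d : ℕ} (H : Matrix (Fin d) (Fin d) ℂ)
    (z : EuclideanSpace ℝ (Fin d)) : ℂ :=
  ∑ a, ∑ b, H a b * (z a : ℂ) * (z b : ℂ)

open Complex Module Topology

lemma quadForm_smul {d : ℕ} (H : Matrix (Fin d) (Fin d) ℂ) (r : ℝ)
    (z : EuclideanSpace ℝ (Fin d)) :
    quadForm H (r • z) = (r : ℂ) ^ 2 * quadForm H z := by
  simp only [quadForm, Finset.mul_sum, PiLp.smul_apply, smul_eq_mul, ofReal_mul]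
  exact Finset.sum_congr rfl fun a _ => Finset.sum_congr rfl fun b _ => by ring

lemma mul_rpow_neg_half_sq {τ : ℝ} (hτ : 0 < τ) : τ * (τ ^ (-(1 / 2 : ℝ))) ^ 2 = 1 := by
  rw [← Real.rpow_natCast, ← Real.rpow_mul hτ.le]
  norm_num [Real.rpow_neg_one, hτ.ne']

lemma norm_cexp_I_mul_ofReal_mul (τ : ℝ) (w : ℂ) :
    ‖cexp (I * τ * w)‖ = Real.exp (-(τ * w.im)) := by
  simp [norm_exp, mul_re, mul_im]

section Rescaling

variable {E : Type*} [NormedAddCommGroup E] [NormedSpace ℝ E]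

lemma integral_comp_rpow_neg_half_smul [MeasurableSpace E] [BorelSpace E] [FiniteDimensional ℝ E]
    (μ : Measure E) [μ.IsAddHaarMeasure] {F : Type*} [NormedAddCommGroup F] [NormedSpace ℝ F]
    (f : E → F) {τ : ℝ} (hτ : 0 < τ) :
    ∫ z, f (τ ^ (-(1 / 2 : ℝ)) • z) ∂μ = τ ^ ((finrank ℝ E : ℝ) / 2) • ∫ z, f z ∂μ := by
  rw [Measure.integral_comp_smul, ← Real.rpow_natCast, ← Real.rpow_mul hτ.le,
    ← Real.rpow_neg hτ.le, abs_of_pos (Real.rpow_pos_of_pos hτ _)]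
  ring_nf

lemma tendsto_mul_comp_rpow_neg_half_smul {ψ Q : E → ℂ} {ρ K : ℝ} (hρ : 0 < ρ)
    (hQ : ∀ (r : ℝ) z, Q (r • z) = (r : ℂ) ^ 2 * Q z)
    (hψ : ∀ z, ‖z‖ ≤ ρ → ‖ψ z - Q z‖ ≤ K * ‖z‖ ^ 3) (z : E) :
    Tendsto (fun τ : ℝ => (τ : ℂ) * ψ (τ ^ (-(1 / 2 : ℝ)) • z)) atTop (𝓝 (Q z)) := by
  have hr : Tendsto (fun τ : ℝ => τ ^ (-(1 / 2 : ℝ))) atTop (𝓝 0) :=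
    tendsto_rpow_neg_atTop (by norm_num)
  have hrz : Tendsto (fun τ : ℝ => ‖τ ^ (-(1 / 2 : ℝ)) • z‖) atTop (𝓝 0) := by
    simpa using (hr.smul_const z).norm
  rw [tendsto_iff_norm_sub_tendsto_zero]
  refine squeeze_zero_norm' ?_ (by simpa only [mul_zero] using hr.const_mul (K * ‖z‖ ^ 3))
  filter_upwards [hrz.eventually_le_const hρ, eventually_gt_atTop 0] with τ hρz hτ
  set r := τ ^ (-(1 / 2 : ℝ))
  have hr0 : 0 < r := Real.rpow_pos_of_pos hτ _
  have hτr : τ * r ^ 2 = 1 := mul_rpow_neg_half_sq hτ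
  -- `τ r² = 1` turns `Q z` into `τ Q (r z)`, so the error is `τ (ψ - Q)(r z) = O(τ r³) = O(r)`.
  have hsub : (τ : ℂ) * ψ (r • z) - Q z = τ * (ψ (r • z) - Q (r • z)) := by
    rw [hQ, mul_sub, ← mul_assoc, ← ofReal_pow, ← ofReal_mul, hτr, ofReal_one, one_mul]
  calc ‖‖(τ : ℂ) * ψ (r • z) - Q z‖‖ = τ * ‖ψ (r • z) - Q (r • z)‖ := by
        rw [norm_norm, hsub, norm_mul, norm_real, Real.norm_of_nonneg hτ.le]
    _ ≤ τ * (K * ‖r • z‖ ^ 3) := by gcongr; exact hψ _ hρz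
    _ = K * ‖z‖ ^ 3 * r := by
        rw [norm_smul, Real.norm_of_nonneg hr0.le]
        linear_combination (K * ‖z‖ ^ 3 * r) * hτr

lemma norm_cexp_I_mul_comp_rpow_neg_half_smul_le {ψ : E → ℂ} {ρ c : ℝ}
    (hψ_im : ∀ z, ‖z‖ ≤ ρ → c * ‖z‖ ^ 2 ≤ (ψ z).im) {τ : ℝ} (hτ : 0 < τ) {z : E}
    (hz : ‖τ ^ (-(1 / 2 : ℝ)) • z‖ ≤ ρ) :
    ‖cexp (I * τ * ψ (τ ^ (-(1 / 2 : ℝ)) • z))‖ ≤ Real.exp (-c * ‖z‖ ^ 2) := by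
  set r := τ ^ (-(1 / 2 : ℝ))
  have hτr : τ * r ^ 2 = 1 := mul_rpow_neg_half_sq hτ
  have hnorm : ‖r • z‖ ^ 2 = r ^ 2 * ‖z‖ ^ 2 := by
    rw [norm_smul, mul_pow, Real.norm_eq_abs, sq_abs]
  rw [norm_cexp_I_mul_ofReal_mul, Real.exp_le_exp]
  have := mul_le_mul_of_nonneg_left (hψ_im _ hz) hτ.le
  rw [hnorm] at this
  linear_combination this - c * ‖z‖ ^ 2 * hτr

end Rescaling

section InnerProductSpace

variable {E : Type*} [NormedAddCommGroup E] [InnerProductSpace ℝ E] [FiniteDimensional ℝ E]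
  [MeasurableSpace E] [BorelSpace E]

lemma integrable_exp_neg_mul_sq_norm {c : ℝ} (hc : 0 < c) :
    Integrable (fun z : E => Real.exp (-c * ‖z‖ ^ 2)) := by
  refine Integrable.of_integral_ne_zero ?_
  rw [GaussianFourier.integral_rexp_neg_mul_sq_norm hc]
  exact (Real.rpow_pos_of_pos (div_pos Real.pi_pos hc) _).ne'

variable {ψ Q B : E → ℂ} {ρ K c : ℝ}

theorem tendsto_integral_cexp_mul_comp_rpow_neg_half_smul (hρ : 0 < ρ) (hc : 0 < c)
    (hQ : ∀ (r : ℝ) z, Q (r • z) = (r : ℂ) ^ 2 * Q z) (hψ_cont : Continuous ψ)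
    (hψ_taylor : ∀ z, ‖z‖ ≤ ρ → ‖ψ z - Q z‖ ≤ K * ‖z‖ ^ 3)
    (hψ_im : ∀ z, ‖z‖ ≤ ρ → c * ‖z‖ ^ 2 ≤ (ψ z).im)
    (hB_cont : Continuous B) (hB_supp : Function.support B ⊆ Metric.closedBall 0 ρ) :
    Tendsto (fun τ : ℝ => ∫ z,
        cexp (I * τ * ψ (τ ^ (-(1 / 2 : ℝ)) • z)) * B (τ ^ (-(1 / 2 : ℝ)) • z))
      atTop (𝓝 (∫ z, cexp (I * Q z) * B 0)) := by
  have hB_compact : HasCompactSupport B :=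
    (isCompact_closedBall 0 ρ).of_isClosed_subset isClosed_closure
      (closure_minimal hB_supp Metric.isClosed_closedBall)
  obtain ⟨M, hM⟩ := hB_compact.exists_bound_of_continuous hB_cont
  have hr : Tendsto (fun τ : ℝ => τ ^ (-(1 / 2 : ℝ))) atTop (𝓝 0) :=
    tendsto_rpow_neg_atTop (by norm_num)
  refine tendsto_integral_filter_of_dominated_convergence (fun z => M * Real.exp (-c * ‖z‖ ^ 2))
    ?_ ?_ ((integrable_exp_neg_mul_sq_norm hc).const_mul M) ?_
  · refine Eventually.of_forall fun τ => Continuous.aestronglyMeasurable ?_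
    fun_prop
  · filter_upwards [eventually_gt_atTop 0] with τ hτ
    refine Eventually.of_forall fun z => ?_
    rw [norm_mul, mul_comm M]
    by_cases hz : ‖τ ^ (-(1 / 2 : ℝ)) • z‖ ≤ ρ
    · exact mul_le_mul (norm_cexp_I_mul_comp_rpow_neg_half_smul_le hψ_im hτ hz) (hM _)
        (norm_nonneg _) (Real.exp_pos _).le
    · have hB0 : B (τ ^ (-(1 / 2 : ℝ)) • z) = 0 :=
        Function.notMem_support.mp fun h => hz (by simpa using hB_supp h)
      rw [hB0, norm_zero, mul_zero]
      exact mul_nonneg (Real.exp_pos _).le ((norm_nonneg _).trans (hM 0))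
  · refine Eventually.of_forall fun z => Tendsto.mul ?_ ?_
    · simpa only [mul_assoc] using
        ((tendsto_mul_comp_rpow_neg_half_smul hρ hQ hψ_taylor z).const_mul I).cexp
    · have hrz : Tendsto (fun τ : ℝ => τ ^ (-(1 / 2 : ℝ)) • z) atTop (𝓝 0) := by
        simpa using hr.smul_const z
      exact (hB_cont.tendsto 0).comp hrz

theorem tendsto_rpow_smul_integral_cexp_mul (hρ : 0 < ρ) (hc : 0 < c)
    (hQ : ∀ (r : ℝ) z, Q (r • z) = (r : ℂ) ^ 2 * Q z) (hψ_cont : Continuous ψ)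
    (hψ_taylor : ∀ z, ‖z‖ ≤ ρ → ‖ψ z - Q z‖ ≤ K * ‖z‖ ^ 3)
    (hψ_im : ∀ z, ‖z‖ ≤ ρ → c * ‖z‖ ^ 2 ≤ (ψ z).im)
    (hB_cont : Continuous B) (hB_supp : Function.support B ⊆ Metric.closedBall 0 ρ) :
    Tendsto (fun τ : ℝ => τ ^ ((finrank ℝ E : ℝ) / 2) • ∫ z, cexp (I * τ * ψ z) * B z)
      atTop (𝓝 (B 0 * ∫ z, cexp (I * Q z))) := by
  rw [mul_comm, ← integral_mul_const]
  refine (tendsto_integral_cexp_mul_comp_rpow_neg_half_smul hρ hc hQ hψ_cont hψ_taylor hψ_im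
    hB_cont hB_supp).congr' ?_
  filter_upwards [eventually_gt_atTop 0] with τ hτ
  exact integral_comp_rpow_neg_half_smul volume (fun z => cexp (I * τ * ψ z) * B z) hτ

end InnerProductSpace

theorem stmt_6_general (d : ℕ) (H : Matrix (Fin d) (Fin d) ℂ)
    (ρ K c : ℝ) (hρ : 0 < ρ) (hc : 0 < c)
    (ψ : EuclideanSpace ℝ (Fin d) → ℂ) (hψ_cont : Continuous ψ)
    (hψ_taylor : ∀ z : EuclideanSpace ℝ (Fin d), ‖z‖ ≤ ρ →
      ‖ψ z - (1 / 2) * quadForm H z‖ ≤ K * ‖z‖ ^ 3)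
    (hψ_im : ∀ z : EuclideanSpace ℝ (Fin d), ‖z‖ ≤ ρ → c * ‖z‖ ^ 2 ≤ (ψ z).im)
    (B : EuclideanSpace ℝ (Fin d) → ℂ) (hB_cont : Continuous B)
    (hB_supp : Function.support B ⊆ Metric.closedBall 0 ρ) :
    Tendsto
      (fun τ : ℝ => (τ ^ ((d : ℝ) / 2)) •
        ∫ z : EuclideanSpace ℝ (Fin d), Complex.exp (Complex.I * τ * ψ z) * B z)
      atTop
      (nhds (B 0 * ∫ z : EuclideanSpace ℝ (Fin d),
        Complex.exp ((Complex.I / 2) * quadForm H z))) := by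
  have hQ : ∀ (r : ℝ) z,
      (1 / 2 : ℂ) * quadForm H (r • z) = (r : ℂ) ^ 2 * ((1 / 2) * quadForm H z) :=
    fun r z => by rw [quadForm_smul]; ring
  simpa only [finrank_euclideanSpace_fin, ← mul_assoc, mul_one_div] using
    tendsto_rpow_smul_integral_cexp_mul hρ hc hQ hψ_cont hψ_taylor hψ_im hB_cont hB_supp

theorem stmt_6 (d : ℕ) (hd : 1 ≤ d) (H : Matrix (Fin d) (Fin d) ℂ) (hH_symm : H.IsSymm)
    (hH_im : (H.map Complex.im).PosDef)
    (ρ K c : ℝ) (hρ : 0 < ρ) (hK : 0 < K) (hc : 0 < c)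
    (ψ : EuclideanSpace ℝ (Fin d) → ℂ) (hψ_cont : Continuous ψ)
    (hψ_taylor : ∀ z : EuclideanSpace ℝ (Fin d), ‖z‖ ≤ ρ →
      ‖ψ z - (1 / 2) * quadForm H z‖ ≤ K * ‖z‖ ^ 3)
    (hψ_im : ∀ z : EuclideanSpace ℝ (Fin d), ‖z‖ ≤ ρ → c * ‖z‖ ^ 2 ≤ (ψ z).im)
    (B : EuclideanSpace ℝ (Fin d) → ℂ) (hB_cont : Continuous B)
    (hB_supp : Function.support B ⊆ Metric.closedBall 0 ρ) :
    Tendsto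
      (fun τ : ℝ => (τ ^ ((d : ℝ) / 2)) •
        ∫ z : EuclideanSpace ℝ (Fin d), Complex.exp (Complex.I * τ * ψ z) * B z)
      atTop
      (nhds (B 0 * ∫ z : EuclideanSpace ℝ (Fin d),
        Complex.exp ((Complex.I / 2) * quadForm H z))) :=
  stmt_6_general d H ρ K c hρ hc ψ hψ_cont hψ_taylor hψ_im B hB_cont hB_supp
end
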